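/- arXiv:2210.04226 — 5 statements merged into one kernel-verified Lean document; each statement's English description precedes it below -/
import Mathlib

section
/- Let Z ⊆ ℂⁿ and let ζ ∈ ℂⁿ be a unit vector. Then every asymptotic direction θ of Z satisfies Re⟨θ,ζ⟩ > 0 if and only if there exist r ∈ ℝ, σ > 0 and R > 0 such that Re⟨z,ζ⟩ > r for every z ∈ Z and Re⟨z,ζ⟩ ≥ σ‖z‖ for every z ∈ Z with ‖z‖ ≥ R. (This expresses that Z is properly contained in a half space of the radial compactification of ℂⁿ with direction ζ if and only if ζ ∈ ĤPC(Z).) -/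
open Filter Topology

/-- The bilinear pairing `⟨z, ζ⟩ = Σ_k z_k ζ_k` on `ℂⁿ`. -/
noncomputable def pairing {n : ℕ} (z ζ : EuclideanSpace ℂ (Fin n)) : ℂ :=
  ∑ k, z k * ζ k

/-- `θ` is an asymptotic direction of `Z ⊆ ℂⁿ`: a unit vector which is the limit of
directions `z_k/‖z_k‖` of a sequence `z_k ∈ Z` with `‖z_k‖ → ∞`. -/
def IsAsympDir {n : ℕ} (Z : Set (EuclideanSpace ℂ (Fin n)))
    (θ : EuclideanSpace ℂ (Fin n)) : Prop :=
  ‖θ‖ = 1 ∧ ∃ u : ℕ → EuclideanSpace ℂ (Fin n),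
    (∀ k, u k ∈ Z) ∧ Tendsto (fun k => ‖u k‖) atTop atTop ∧
    Tendsto (fun k => (‖u k‖)⁻¹ • u k) atTop (𝓝 θ)

/-!
Write `f = Re⟨·, ζ⟩`, a continuous `ℝ`-linear functional. If `σ‖z‖ ≤ f z` on `Z` outside a ball,
then `σ ≤ f θ` for every asymptotic direction `θ`, by continuity of `f`. Conversely, if no such cone
bound holds, there are `z_k ∈ Z` with `‖z_k‖ → ∞` and `f z_k < ‖z_k‖ / (k + 1)`; by compactness of
the unit sphere a subsequence of their directions converges to an asymptotic direction `θ` with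
`f θ ≤ 0`. A lower bound `r` on `f` over `Z` then comes for free, since `f` is bounded on balls.
-/

section ConeBound

variable {E : Type*} [NormedAddCommGroup E] [NormedSpace ℝ E] (f : E →L[ℝ] ℝ)

theorem ContinuousLinearMap.tendsto_inv_norm_mul_apply {u : ℕ → E} {θ : E}
    (hdir : Tendsto (fun k => ‖u k‖⁻¹ • u k) atTop (𝓝 θ)) :
    Tendsto (fun k => ‖u k‖⁻¹ * f (u k)) atTop (𝓝 (f θ)) := by
  simpa only [Function.comp_def, map_smul, smul_eq_mul] using (f.continuous.tendsto θ).comp hdir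

theorem ContinuousLinearMap.le_apply_of_tendsto_direction {u : ℕ → E} {θ : E} {σ : ℝ}
    (hu : Tendsto (fun k => ‖u k‖) atTop atTop)
    (hdir : Tendsto (fun k => ‖u k‖⁻¹ • u k) atTop (𝓝 θ))
    (hσ : ∀ᶠ k in atTop, σ * ‖u k‖ ≤ f (u k)) : σ ≤ f θ := by
  refine ge_of_tendsto (f.tendsto_inv_norm_mul_apply hdir) ?_
  filter_upwards [hσ, hu.eventually_gt_atTop 0] with k hk hpos
  rwa [le_inv_mul_iff₀ hpos, mul_comm]

theorem ContinuousLinearMap.exists_lt_apply_of_cone_bound {Z : Set E} {σ R : ℝ} (hσ : 0 ≤ σ)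
    (hcone : ∀ z ∈ Z, R ≤ ‖z‖ → σ * ‖z‖ ≤ f z) : ∃ r, ∀ z ∈ Z, r < f z := by
  refine ⟨-(‖f‖ * |R|) - 1, fun z hz => ?_⟩
  rcases lt_or_ge ‖z‖ R with hzR | hzR
  · have hnorm : ‖z‖ ≤ |R| := hzR.le.trans (le_abs_self R)
    have : -f z ≤ ‖f‖ * |R| := calc
      -f z ≤ ‖f z‖ := neg_le_abs _
      _ ≤ ‖f‖ * ‖z‖ := f.le_opNorm z
      _ ≤ ‖f‖ * |R| := by gcongr
    linarith
  · have : 0 ≤ f z := (by positivity : 0 ≤ σ * ‖z‖).trans (hcone z hz hzR)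
    linarith [mul_nonneg (norm_nonneg f) (abs_nonneg R)]

theorem exists_subseq_tendsto_inv_norm_smul [ProperSpace E] {u : ℕ → E} (hu : ∀ k, u k ≠ 0) :
    ∃ θ, ‖θ‖ = 1 ∧ ∃ φ : ℕ → ℕ, StrictMono φ ∧
      Tendsto (fun k => ‖u (φ k)‖⁻¹ • u (φ k)) atTop (𝓝 θ) := by
  obtain ⟨θ, hθ, φ, hφ, hdir⟩ := (isCompact_sphere (0 : E) 1).tendsto_subseq
    (x := fun k => ‖u k‖⁻¹ • u k) fun k => by simp [norm_smul, hu k]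
  exact ⟨θ, by simpa using hθ, φ, hφ, hdir⟩

theorem ContinuousLinearMap.exists_tendsto_direction_apply_nonpos [ProperSpace E] {Z : Set E}
    (h : ¬ ∃ σ > 0, ∃ R > 0, ∀ z ∈ Z, R ≤ ‖z‖ → σ * ‖z‖ ≤ f z) :
    ∃ θ, ∃ u : ℕ → E, ‖θ‖ = 1 ∧ (∀ k, u k ∈ Z) ∧ Tendsto (fun k => ‖u k‖) atTop atTop ∧
      Tendsto (fun k => ‖u k‖⁻¹ • u k) atTop (𝓝 θ) ∧ f θ ≤ 0 := by
  push Not at h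
  choose u huZ hnorm hf using
    fun k : ℕ => h ((k : ℝ) + 1)⁻¹ (by positivity) ((k : ℝ) + 1) (by positivity)
  have hk : Tendsto (fun k : ℕ => (k : ℝ) + 1) atTop atTop :=
    tendsto_atTop_add_const_right _ 1 tendsto_natCast_atTop_atTop
  have hpos (k : ℕ) : 0 < ‖u k‖ := (by positivity : (0 : ℝ) < k + 1).trans_le (hnorm k)
  obtain ⟨θ, hθ, φ, hφ, hdir⟩ :=
    exists_subseq_tendsto_inv_norm_smul fun k => norm_pos_iff.1 (hpos k)
  refine ⟨θ, u ∘ φ, hθ, fun k => huZ _, (tendsto_atTop_mono hnorm hk).comp hφ.tendsto_atTop,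
    hdir, ?_⟩
  have hbound (k : ℕ) : ‖u k‖⁻¹ * f (u k) ≤ ((k : ℝ) + 1)⁻¹ := by
    rw [inv_mul_le_iff₀ (hpos k), mul_comm]
    exact (hf k).le
  exact le_of_tendsto_of_tendsto' (f.tendsto_inv_norm_mul_apply hdir)
    (tendsto_inv_atTop_zero.comp (hk.comp hφ.tendsto_atTop)) fun k => hbound (φ k)

end ConeBound

noncomputable def rePairingCLM {n : ℕ} (ζ : EuclideanSpace ℂ (Fin n)) :
    EuclideanSpace ℂ (Fin n) →L[ℝ] ℝ :=
  LinearMap.toContinuousLinearMap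
    { toFun := fun z => (pairing z ζ).re
      map_add' := fun z w => by simp [pairing, add_mul, Finset.sum_add_distrib]
      map_smul' := fun c z => by
        simp only [pairing, PiLp.smul_apply, Complex.real_smul, mul_assoc, ← Finset.mul_sum,
          Complex.re_ofReal_mul, RingHom.id_apply, smul_eq_mul] }

@[simp]
theorem rePairingCLM_apply {n : ℕ} (ζ z : EuclideanSpace ℂ (Fin n)) :
    rePairingCLM ζ z = (pairing z ζ).re :=
  rfl

theorem properly_contained_in_halfspace_iff_mem_HPC_general {n : ℕ}
    (Z : Set (EuclideanSpace ℂ (Fin n))) (ζ : EuclideanSpace ℂ (Fin n)) :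
    (∀ θ, IsAsympDir Z θ → 0 < (pairing θ ζ).re) ↔
      ∃ r : ℝ, ∃ σ > (0 : ℝ), ∃ R > (0 : ℝ),
        (∀ z ∈ Z, r < (pairing z ζ).re) ∧
        (∀ z ∈ Z, R ≤ ‖z‖ → σ * ‖z‖ ≤ (pairing z ζ).re) := by
  simp only [← rePairingCLM_apply]
  constructor
  · intro h
    obtain ⟨σ, hσ, R, hR, hcone⟩ :
        ∃ σ > 0, ∃ R > 0, ∀ z ∈ Z, R ≤ ‖z‖ → σ * ‖z‖ ≤ rePairingCLM ζ z := by
      by_contra hcone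
      obtain ⟨θ, u, hθ, huZ, hu, hdir, hθζ⟩ :=
        (rePairingCLM ζ).exists_tendsto_direction_apply_nonpos hcone
      exact (h θ ⟨hθ, u, huZ, hu, hdir⟩).not_ge hθζ
    obtain ⟨r, hr⟩ := (rePairingCLM ζ).exists_lt_apply_of_cone_bound hσ.le hcone
    exact ⟨r, σ, hσ, R, hR, hr, hcone⟩
  · rintro ⟨-, σ, hσ, R, -, -, hcone⟩ θ ⟨-, u, huZ, hu, hdir⟩
    refine hσ.trans_le ((rePairingCLM ζ).le_apply_of_tendsto_direction hu hdir ?_)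
    filter_upwards [hu.eventually_ge_atTop R] with k hk
    exact hcone (u k) (huZ k) hk

/-- `Z` is properly contained in a half space of `𝔻_{ℂⁿ}` with direction `ζ`
(a unit vector) if and only if `ζ ∈ ĤPC(Z)`, i.e. every asymptotic direction `θ` of `Z`
satisfies `Re⟨θ,ζ⟩ > 0`. -/
theorem properly_contained_in_halfspace_iff_mem_HPC {n : ℕ}
    (Z : Set (EuclideanSpace ℂ (Fin n))) (ζ : EuclideanSpace ℂ (Fin n))
    (hζ : ‖ζ‖ = 1) :
    (∀ θ, IsAsympDir Z θ → 0 < (pairing θ ζ).re) ↔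
      ∃ r : ℝ, ∃ σ > (0 : ℝ), ∃ R > (0 : ℝ),
        (∀ z ∈ Z, r < (pairing z ζ).re) ∧
        (∀ z ∈ Z, R ≤ ‖z‖ → σ * ‖z‖ ≤ (pairing z ζ).re) :=
  properly_contained_in_halfspace_iff_mem_HPC_general Z ζ
end

section
/- Let K ⊆ ℂⁿ be a nonempty closed subset. Then the support function h_K(ζ) := inf_{z∈K} Re⟨z,ζ⟩, viewed as a function on the unit sphere of ℂⁿ with values in {−∞} ∪ ℝ, is upper semi-continuous; moreover h_K is real-valued (h_K(ζ) > −∞) and continuous at every point of ĤPC(K). -/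
/-!
Each `ξ ↦ Re⟨z, ξ⟩` is continuous, so their infimum `h_K` is upper semicontinuous. For
`ζ ∈ ĤPC(K)`, compactness of the unit ball turns positivity on the asymptotic directions into
the coercivity bound `c‖z‖ - C ≤ Re⟨z, ζ⟩` on `K`, with `c > 0`; in particular `h_K(ζ) ≥ -C`.
Since then `‖z‖ ≤ (Re⟨z, ζ⟩ + C) / c`, moving `ζ` by at most `t c` changes `Re⟨z, ·⟩` by at most
`t (Re⟨z, ζ⟩ + C)`, so `h_K(ξ) ≥ (1 - t) h_K(ζ) - t C` near `ζ`: `h_K` is also lower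
semicontinuous at `ζ`.
-/

open Filter Topology

/-- `ĤPC(Z)`: the set of unit vectors `ζ` with `Re⟨θ,ζ⟩ > 0` for every asymptotic
direction `θ` of `Z`. -/
noncomputable def HPC {n : ℕ} (Z : Set (EuclideanSpace ℂ (Fin n))) :
    Set (EuclideanSpace ℂ (Fin n)) :=
  {ζ | ‖ζ‖ = 1 ∧ ∀ θ, IsAsympDir Z θ → 0 < (pairing θ ζ).re}

/-- The support function `h_K(ζ) = inf_{z ∈ K} Re⟨z,ζ⟩`, with values in `{−∞} ∪ ℝ`
(modelled inside `EReal`). -/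
noncomputable def suppFn {n : ℕ} (K : Set (EuclideanSpace ℂ (Fin n)))
    (ζ : EuclideanSpace ℂ (Fin n)) : EReal :=
  ⨅ z : K, ((pairing (z : EuclideanSpace ℂ (Fin n)) ζ).re : EReal)

section Pairing

variable {n : ℕ}

lemma norm_pairing_le (z w : EuclideanSpace ℂ (Fin n)) : ‖pairing z w‖ ≤ ‖z‖ * ‖w‖ :=
  calc ‖pairing z w‖ ≤ ∑ k, ‖z k‖ * ‖w k‖ := by
        simpa only [pairing, norm_mul] using norm_sum_le Finset.univ fun k => z k * w k
    _ ≤ √(∑ k, ‖z k‖ ^ 2) * √(∑ k, ‖w k‖ ^ 2) := Real.sum_mul_le_sqrt_mul_sqrt _ _ _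
    _ = ‖z‖ * ‖w‖ := by rw [EuclideanSpace.norm_eq, EuclideanSpace.norm_eq]

lemma pairing_sub_right (z w w' : EuclideanSpace ℂ (Fin n)) :
    pairing z (w - w') = pairing z w - pairing z w' := by
  simp [pairing, mul_sub, Finset.sum_sub_distrib]

lemma re_pairing_smul_left (r : ℝ) (z w : EuclideanSpace ℂ (Fin n)) :
    (pairing (r • z) w).re = r * (pairing z w).re := by
  simp only [pairing, PiLp.smul_apply, Complex.real_smul, mul_assoc, ← Finset.mul_sum,
    Complex.re_ofReal_mul]

lemma neg_mul_norm_le_re_pairing (z w : EuclideanSpace ℂ (Fin n)) :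
    -(‖z‖ * ‖w‖) ≤ (pairing z w).re :=
  neg_le_of_abs_le ((Complex.abs_re_le_norm _).trans (norm_pairing_le z w))

lemma re_pairing_sub_le (z w w' : EuclideanSpace ℂ (Fin n)) :
    (pairing z w').re - ‖z‖ * ‖w - w'‖ ≤ (pairing z w).re := by
  have := neg_mul_norm_le_re_pairing z (w - w')
  rw [pairing_sub_right, Complex.sub_re] at this
  linarith

lemma continuous_re_pairing_left (w : EuclideanSpace ℂ (Fin n)) :
    Continuous fun z => (pairing z w).re := by
  unfold pairing; fun_prop

lemma continuous_re_pairing_right (z : EuclideanSpace ℂ (Fin n)) :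
    Continuous fun w => (pairing z w).re := by
  unfold pairing; fun_prop

end Pairing

section Asymptotic

variable {n : ℕ} {K : Set (EuclideanSpace ℂ (Fin n))} {ζ : EuclideanSpace ℂ (Fin n)}

lemma exists_isAsympDir_of_tendsto_norm {u : ℕ → EuclideanSpace ℂ (Fin n)} (hu : ∀ k, u k ∈ K)
    (hnorm : Tendsto (fun k => ‖u k‖) atTop atTop) :
    ∃ θ, IsAsympDir K θ ∧ ∃ φ : ℕ → ℕ, StrictMono φ ∧
      Tendsto (fun k => ‖u (φ k)‖⁻¹ • u (φ k)) atTop (𝓝 θ) := by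
  have hball : ∀ k, ‖u k‖⁻¹ • u k ∈ Metric.closedBall (0 : EuclideanSpace ℂ (Fin n)) 1 :=
    fun k => by simpa [norm_smul] using inv_mul_le_one_of_le₀ le_rfl (norm_nonneg (u k))
  obtain ⟨θ, -, φ, hφ, hlim⟩ := (isCompact_closedBall _ _).tendsto_subseq hball
  have hnormφ := hnorm.comp hφ.tendsto_atTop
  have hunit : ∀ᶠ k in atTop, ‖‖u (φ k)‖⁻¹ • u (φ k)‖ = 1 := by
    filter_upwards [hnormφ.eventually_gt_atTop 0] with k (hk : 0 < ‖u (φ k)‖)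
    rw [norm_smul, norm_inv, norm_norm, inv_mul_cancel₀ hk.ne']
  have hθ : ‖θ‖ = 1 :=
    tendsto_nhds_unique hlim.norm (tendsto_const_nhds.congr' (hunit.mono fun _ h => h.symm))
  exact ⟨θ, ⟨hθ, u ∘ φ, fun k => hu (φ k), hnormφ, hlim⟩, φ, hφ, hlim⟩

lemma exists_coercive_of_mem_HPC (hζ : ζ ∈ HPC K) :
    ∃ c > 0, ∃ R : ℝ, ∀ z ∈ K, R ≤ ‖z‖ → c * ‖z‖ ≤ (pairing z ζ).re := by
  by_contra! h
  choose u huK hulow hure using fun k : ℕ => h (1 / ((k : ℝ) + 1)) (by positivity) ((k : ℝ) + 1)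
  have hupos (k : ℕ) : 0 < ‖u k‖ := lt_of_lt_of_le (by positivity) (hulow k)
  have hnorm : Tendsto (fun k => ‖u k‖) atTop atTop :=
    tendsto_atTop_mono hulow (tendsto_atTop_add_const_right _ 1 tendsto_natCast_atTop_atTop)
  obtain ⟨θ, hθ, φ, hφ, hlim⟩ := exists_isAsympDir_of_tendsto_norm huK hnorm
  have hre (k : ℕ) : (pairing (‖u k‖⁻¹ • u k) ζ).re ≤ 1 / ((k : ℝ) + 1) := by
    rw [re_pairing_smul_left, inv_mul_le_iff₀ (hupos k), mul_comm]
    exact (hure k).le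
  have hθζ : (pairing θ ζ).re ≤ 0 :=
    le_of_tendsto_of_tendsto' ((continuous_re_pairing_left ζ).continuousAt.tendsto.comp hlim)
      (tendsto_one_div_add_atTop_nhds_zero_nat.comp hφ.tendsto_atTop) fun k => hre (φ k)
  exact hθζ.not_gt (hζ.2 θ hθ)

lemma exists_affine_lower_bound_of_mem_HPC (hζ : ζ ∈ HPC K) :
    ∃ c > 0, ∃ C : ℝ, ∀ z ∈ K, c * ‖z‖ - C ≤ (pairing z ζ).re := by
  obtain ⟨c, hc, R, hcoer⟩ := exists_coercive_of_mem_HPC hζ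
  refine ⟨c, hc, max R 0 * (c + ‖ζ‖), fun z hz => ?_⟩
  have hC : 0 ≤ max R 0 * (c + ‖ζ‖) := by positivity
  rcases le_or_gt R ‖z‖ with hR | hR
  · linarith [hcoer z hz hR]
  · have hz : ‖z‖ ≤ max R 0 := hR.le.trans (le_max_left _ _)
    nlinarith [neg_mul_norm_le_re_pairing z ζ, norm_nonneg z, norm_nonneg ζ]

end Asymptotic

section SupportFunction

variable {n : ℕ} {K : Set (EuclideanSpace ℂ (Fin n))} {ζ : EuclideanSpace ℂ (Fin n)}

lemma coe_le_suppFn_iff {ξ : EuclideanSpace ℂ (Fin n)} {a : ℝ} :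
    (a : EReal) ≤ suppFn K ξ ↔ ∀ z ∈ K, a ≤ (pairing z ξ).re := by
  simp [suppFn, le_iInf_iff]

lemma upperSemicontinuous_suppFn (K : Set (EuclideanSpace ℂ (Fin n))) :
    UpperSemicontinuous (suppFn K) :=
  upperSemicontinuous_iInf fun z : K =>
    (continuous_coe_real_ereal.comp (continuous_re_pairing_right z.1)).upperSemicontinuous

lemma suppFn_ne_bot_of_mem_HPC (hζ : ζ ∈ HPC K) : suppFn K ζ ≠ ⊥ := by
  obtain ⟨c, hc, C, hbound⟩ := exists_affine_lower_bound_of_mem_HPC hζ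
  refine ne_bot_of_le_ne_bot (EReal.coe_ne_bot (-C)) (coe_le_suppFn_iff.2 fun z hz => ?_)
  nlinarith [hbound z hz, norm_nonneg z]

lemma le_re_pairing_of_norm_sub_le {z ξ : EuclideanSpace ℂ (Fin n)} {a c C t : ℝ}
    (ht₀ : 0 ≤ t) (ht₁ : t ≤ 1) (hbound : c * ‖z‖ - C ≤ (pairing z ζ).re)
    (ha : a ≤ (pairing z ζ).re) (hξ : ‖ξ - ζ‖ ≤ t * c) :
    (1 - t) * a - t * C ≤ (pairing z ξ).re := by
  nlinarith [re_pairing_sub_le z ξ ζ, mul_le_mul_of_nonneg_left hξ (norm_nonneg z),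
    mul_le_mul_of_nonneg_left hbound ht₀, mul_le_mul_of_nonneg_left ha (sub_nonneg.2 ht₁)]

lemma lowerSemicontinuousAt_suppFn_of_mem_HPC (hζ : ζ ∈ HPC K) :
    LowerSemicontinuousAt (suppFn K) ζ := by
  intro y hy
  obtain ⟨b, hyb, hb⟩ := EReal.lt_iff_exists_real_btwn.1 hy
  obtain ⟨a, hba, ha⟩ := EReal.lt_iff_exists_real_btwn.1 hb
  obtain ⟨c, hc, C, hbound⟩ := exists_affine_lower_bound_of_mem_HPC hζ
  obtain ⟨t, ⟨ht₀, ht₁⟩, hbt⟩ : ∃ t ∈ Set.Ioo (0 : ℝ) 1, b < (1 - t) * a - t * C := by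
    have hcont : Continuous fun t : ℝ => (1 - t) * a - t * C := by fun_prop
    have hb0 : b < (1 - 0) * a - 0 * C := by simpa using EReal.coe_lt_coe_iff.1 hba
    exact (Filter.Eventually.and (Ioo_mem_nhdsGT one_pos)
      (nhdsWithin_le_nhds (hcont.continuousAt.eventually (lt_mem_nhds hb0)))).exists
  filter_upwards [Metric.closedBall_mem_nhds ζ (mul_pos ht₀ hc)] with ξ hξ
  refine hyb.trans ((EReal.coe_lt_coe_iff.2 hbt).trans_le (coe_le_suppFn_iff.2 fun z hz => ?_))
  exact le_re_pairing_of_norm_sub_le ht₀.le ht₁.le (hbound z hz)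
    (coe_le_suppFn_iff.1 ha.le z hz) (by rwa [← dist_eq_norm])

lemma continuousAt_suppFn_of_mem_HPC (hζ : ζ ∈ HPC K) : ContinuousAt (suppFn K) ζ :=
  continuousAt_iff_lower_upperSemicontinuousAt.2
    ⟨lowerSemicontinuousAt_suppFn_of_mem_HPC hζ, upperSemicontinuous_suppFn K ζ⟩

end SupportFunction

theorem suppFn_upperSemicontinuous_and_continuousAt_HPC_general {n : ℕ}
    (K : Set (EuclideanSpace ℂ (Fin n))) :
    UpperSemicontinuous (fun ζ : Metric.sphere (0 : EuclideanSpace ℂ (Fin n)) 1 =>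
      suppFn K (ζ : EuclideanSpace ℂ (Fin n))) ∧
    ∀ ζ : Metric.sphere (0 : EuclideanSpace ℂ (Fin n)) 1,
      (ζ : EuclideanSpace ℂ (Fin n)) ∈ HPC K →
        suppFn K (ζ : EuclideanSpace ℂ (Fin n)) ≠ ⊥ ∧
        ContinuousAt (fun ξ : Metric.sphere (0 : EuclideanSpace ℂ (Fin n)) 1 =>
          suppFn K (ξ : EuclideanSpace ℂ (Fin n))) ζ :=
  ⟨(upperSemicontinuous_suppFn K).comp continuous_subtype_val, fun _ hζ =>
    ⟨suppFn_ne_bot_of_mem_HPC hζ,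
      (continuousAt_suppFn_of_mem_HPC hζ).comp continuous_subtype_val.continuousAt⟩⟩

/-- For a nonempty closed `K ⊆ ℂⁿ`, the support function `h_K`, viewed on the unit
sphere, is upper semi-continuous; moreover it is finite (`≠ −∞`) and continuous at each
point of `ĤPC(K)`. -/
theorem suppFn_upperSemicontinuous_and_continuousAt_HPC {n : ℕ}
    (K : Set (EuclideanSpace ℂ (Fin n))) (hK : K.Nonempty) (hcl : IsClosed K) :
    UpperSemicontinuous (fun ζ : Metric.sphere (0 : EuclideanSpace ℂ (Fin n)) 1 =>
      suppFn K (ζ : EuclideanSpace ℂ (Fin n))) ∧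
    ∀ ζ : Metric.sphere (0 : EuclideanSpace ℂ (Fin n)) 1,
      (ζ : EuclideanSpace ℂ (Fin n)) ∈ HPC K →
        suppFn K (ζ : EuclideanSpace ℂ (Fin n)) ≠ ⊥ ∧
        ContinuousAt (fun ξ : Metric.sphere (0 : EuclideanSpace ℂ (Fin n)) 1 =>
          suppFn K (ξ : EuclideanSpace ℂ (Fin n))) ζ :=
  suppFn_upperSemicontinuous_and_continuousAt_HPC_general K
end

section
/- Let C ⊆ ℝⁿ be a nonempty closed convex set, and let I be the set of unit vectors ξ ∈ ℝⁿ such that ⟨θ,ξ⟩ > 0 for every asymptotic direction θ of C. If I ≠ ∅, then C = ⋂_{ξ∈I} { x ∈ ℝⁿ : ⟨x,ξ⟩ ≥ h_C(ξ) }, where h_C(ξ) := inf_{y∈C} ⟨y,ξ⟩. -/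
/-! A point `x ∉ C` is strictly separated from `C` by a half space `⟨·,ξ₀⟩ > u`. As `⟨·,ξ₀⟩` is
bounded below on `C`, `ξ₀` pairs nonnegatively with every asymptotic direction, and tilting it
slightly towards some `ξ₁ ∈ I` keeps the separation while making all these pairings positive.
Conversely, for `ξ ∈ I` the functional `⟨·,ξ⟩` is bounded below on `C` (so `h_C(ξ)` is a genuine
infimum, not the junk value of `sInf`): otherwise points of `C` with `⟨y,ξ⟩ → -∞` escape to
infinity, and compactness of the unit sphere gives an asymptotic direction `θ` with `⟨θ,ξ⟩ ≤ 0`. -/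

open Filter Topology

/-- `θ` is an asymptotic direction of `C ⊆ ℝⁿ`: a unit vector which is the limit of
directions `x_k/‖x_k‖` of a sequence `x_k ∈ C` with `‖x_k‖ → ∞`. -/
def IsAsympDirR {n : ℕ} (C : Set (EuclideanSpace ℝ (Fin n)))
    (θ : EuclideanSpace ℝ (Fin n)) : Prop :=
  ‖θ‖ = 1 ∧ ∃ u : ℕ → EuclideanSpace ℝ (Fin n),
    (∀ k, u k ∈ C) ∧ Tendsto (fun k => ‖u k‖) atTop atTop ∧
    Tendsto (fun k => (‖u k‖)⁻¹ • u k) atTop (𝓝 θ)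

open scoped RealInnerProductSpace

section Separation

variable {E : Type*} [NormedAddCommGroup E] [InnerProductSpace ℝ E]

lemma exists_inner_lt_of_notMem_of_isClosed_of_convex [CompleteSpace E] {C : Set E} {x : E}
    (hcl : IsClosed C) (hconv : Convex ℝ C) (hx : x ∉ C) :
    ∃ (ξ : E) (u : ℝ), ⟪x, ξ⟫ < u ∧ ∀ y ∈ C, u < ⟪y, ξ⟫ := by
  obtain ⟨f, u, hfx, hfC⟩ := geometric_hahn_banach_point_closed hconv hcl hx
  have hf : ∀ y, ⟪y, (InnerProductSpace.toDual ℝ E).symm f⟫ = f y := fun y => by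
    rw [real_inner_comm, InnerProductSpace.toDual_symm_apply]
  exact ⟨_, u, (hf x).symm ▸ hfx, fun y hy => (hf y).symm ▸ hfC y hy⟩

lemma exists_pos_add_smul_separates {C : Set E} {x ξ₀ ξ₁ : E} {u b : ℝ}
    (hx : ⟪x, ξ₀⟫ < u) (hC : ∀ y ∈ C, u < ⟪y, ξ₀⟫) (hb : ∀ y ∈ C, b ≤ ⟪y, ξ₁⟫) :
    ∃ t : ℝ, 0 < t ∧ ∃ v : ℝ, ⟪x, ξ₀ + t • ξ₁⟫ < v ∧ ∀ y ∈ C, v < ⟪y, ξ₀ + t • ξ₁⟫ := by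
  obtain ⟨t, ht, htd⟩ := exists_pos_mul_lt (sub_pos.2 hx) (⟪x, ξ₁⟫ - b)
  refine ⟨t, ht, u + t * b, ?_, fun y hy => ?_⟩
  · rw [inner_add_right, real_inner_smul_right]
    linarith
  · rw [inner_add_right, real_inner_smul_right]
    nlinarith [hC y hy, hb y hy]

lemma inner_lt_sInf_of_separates {C : Set E} (hne : C.Nonempty) {x ξ : E} {v : ℝ}
    (hx : ⟪x, ξ⟫ < v) (hC : ∀ y ∈ C, v < ⟪y, ξ⟫) :
    ⟪x, ξ⟫ < sInf ((⟪·, ξ⟫) '' C) :=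
  hx.trans_le <| le_csInf (hne.image _) <| by
    rintro _ ⟨y, hy, rfl⟩
    exact (hC y hy).le

end Separation

section AsymptoticDirections

variable {n : ℕ} {C : Set (EuclideanSpace ℝ (Fin n))}

lemma exists_isAsympDirR_of_tendsto_norm {u : ℕ → EuclideanSpace ℝ (Fin n)}
    (huC : ∀ k, u k ∈ C) (hu : Tendsto (fun k => ‖u k‖) atTop atTop) :
    ∃ θ, IsAsympDirR C θ ∧ ∃ φ : ℕ → ℕ,
      Tendsto (fun k => ‖u (φ k)‖⁻¹ • u (φ k)) atTop (𝓝 θ) := by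
  have hsphere : ∃ᶠ k in atTop, ‖u k‖⁻¹ • u k ∈ Metric.sphere 0 1 := by
    refine ((hu.eventually_gt_atTop 0).mono fun k hk => ?_).frequently
    simp [norm_smul, inv_mul_cancel₀ hk.ne']
  obtain ⟨θ, hθ, φ, hφ, hlim⟩ := (isCompact_sphere 0 1).tendsto_subseq' hsphere
  exact ⟨θ, ⟨by simpa using hθ, u ∘ φ, fun k => huC _, hu.comp hφ.tendsto_atTop, hlim⟩,
    φ, hlim⟩

lemma IsAsympDirR.inner_nonneg {θ ξ : EuclideanSpace ℝ (Fin n)} {b : ℝ}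
    (hθ : IsAsympDirR C θ) (hb : ∀ y ∈ C, b ≤ ⟪y, ξ⟫) : 0 ≤ ⟪θ, ξ⟫ := by
  obtain ⟨-, u, huC, hu, hlim⟩ := hθ
  have hlow : Tendsto (fun k => ‖u k‖⁻¹ * b) atTop (𝓝 0) := by
    simpa using hu.inv_tendsto_atTop.mul_const b
  refine le_of_tendsto_of_tendsto hlow (hlim.inner tendsto_const_nhds) <|
    Eventually.of_forall fun k => ?_
  simp only [real_inner_smul_left]
  exact mul_le_mul_of_nonneg_left (hb _ (huC k)) (by positivity)

lemma exists_isAsympDirR_inner_nonpos_of_not_bddBelow {ξ : EuclideanSpace ℝ (Fin n)}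
    (h : ¬BddBelow ((⟪·, ξ⟫) '' C)) : ∃ θ, IsAsympDirR C θ ∧ ⟪θ, ξ⟫ ≤ 0 := by
  have hξ : 0 < ‖ξ‖ := norm_pos_iff.2 fun h0 => h ⟨0, by simp [h0, lowerBounds]⟩
  have : ∀ k : ℕ, ∃ y ∈ C, ⟪y, ξ⟫ < -k := fun k => by
    obtain ⟨_, ⟨y, hy, rfl⟩, hlt⟩ := not_bddBelow_iff.1 h (-k)
    exact ⟨y, hy, hlt⟩
  choose u huC hu using this
  have hnorm : Tendsto (fun k => ‖u k‖) atTop atTop := by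
    refine tendsto_atTop_mono (fun k => ?_)
      (tendsto_natCast_atTop_atTop.atTop_div_const hξ)
    rw [div_le_iff₀ hξ]
    linarith [hu k, neg_le_of_abs_le (abs_real_inner_le_norm (u k) ξ)]
  obtain ⟨θ, hθ, φ, hlim⟩ := exists_isAsympDirR_of_tendsto_norm huC hnorm
  refine ⟨θ, hθ, le_of_tendsto (hlim.inner tendsto_const_nhds) <|
    Eventually.of_forall fun k => ?_⟩
  simp only [real_inner_smul_left]
  exact mul_nonpos_of_nonneg_of_nonpos (by positivity)
    ((hu _).le.trans (neg_nonpos.2 (Nat.cast_nonneg _)))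

lemma bddBelow_inner_image_of_forall_isAsympDirR {ξ : EuclideanSpace ℝ (Fin n)}
    (hξ : ∀ θ, IsAsympDirR C θ → 0 < ⟪θ, ξ⟫) : BddBelow ((⟪·, ξ⟫) '' C) := by
  by_contra h
  obtain ⟨θ, hθ, hle⟩ := exists_isAsympDirR_inner_nonpos_of_not_bddBelow h
  exact (hξ θ hθ).not_ge hle

lemma exists_unit_inner_lt_sInf_of_notMem (hne : C.Nonempty) (hcl : IsClosed C)
    (hconv : Convex ℝ C) {ξ₁ : EuclideanSpace ℝ (Fin n)}
    (hξ₁ : ∀ θ, IsAsympDirR C θ → 0 < ⟪θ, ξ₁⟫) {x : EuclideanSpace ℝ (Fin n)} (hx : x ∉ C) :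
    ∃ ξ, ‖ξ‖ = 1 ∧ (∀ θ, IsAsympDirR C θ → 0 < ⟪θ, ξ⟫) ∧ ⟪x, ξ⟫ < sInf ((⟪·, ξ⟫) '' C) := by
  obtain ⟨ξ₀, u, hxu, hCu⟩ := exists_inner_lt_of_notMem_of_isClosed_of_convex hcl hconv hx
  obtain ⟨b, hb⟩ := bddBelow_inner_image_of_forall_isAsympDirR hξ₁
  have hb' : ∀ y ∈ C, b ≤ ⟪y, ξ₁⟫ := fun y hy => hb ⟨y, hy, rfl⟩
  obtain ⟨t, ht, v, hxv, hCv⟩ := exists_pos_add_smul_separates hxu hCu hb'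
  set ξ := ξ₀ + t • ξ₁
  have hpos : ∀ θ, IsAsympDirR C θ → 0 < ⟪θ, ξ⟫ := fun θ hθ => by
    rw [inner_add_right, real_inner_smul_right]
    have := hθ.inner_nonneg fun y hy => (hCu y hy).le
    have := hξ₁ θ hθ
    positivity
  obtain ⟨y₀, hy₀⟩ := hne
  have hnorm : 0 < ‖ξ‖ := norm_pos_iff.2 fun h0 => by
    have := (hCv y₀ hy₀).trans' hxv
    simp [h0] at this
  refine ⟨‖ξ‖⁻¹ • ξ, by simp [norm_smul, hnorm.ne'], fun θ hθ => ?_,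
    inner_lt_sInf_of_separates ⟨y₀, hy₀⟩ (v := ‖ξ‖⁻¹ * v) ?_ fun y hy => ?_⟩ <;>
    rw [real_inner_smul_right]
  · exact mul_pos (inv_pos.2 hnorm) (hpos θ hθ)
  · exact mul_lt_mul_of_pos_left hxv (inv_pos.2 hnorm)
  · exact mul_lt_mul_of_pos_left (hCv y hy) (inv_pos.2 hnorm)

end AsymptoticDirections

/-- A nonempty closed convex `C ⊆ ℝⁿ` is the intersection of the closed half spaces
`⟨x,ξ⟩ ≥ h_C(ξ)`, where `ξ` ranges over the (assumed nonempty) set `I` of unit vectors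
having positive inner product with every asymptotic direction of `C`, and
`h_C(ξ) = inf_{y ∈ C} ⟨y,ξ⟩`. -/
theorem closed_convex_eq_iInter_halfspaces {n : ℕ}
    (C : Set (EuclideanSpace ℝ (Fin n))) (hne : C.Nonempty) (hcl : IsClosed C)
    (hconv : Convex ℝ C)
    (hI : {ξ : EuclideanSpace ℝ (Fin n) |
        ‖ξ‖ = 1 ∧ ∀ θ, IsAsympDirR C θ → 0 < (inner ℝ θ ξ : ℝ)}.Nonempty) :
    C = ⋂ ξ ∈ {ξ : EuclideanSpace ℝ (Fin n) |
          ‖ξ‖ = 1 ∧ ∀ θ, IsAsympDirR C θ → 0 < (inner ℝ θ ξ : ℝ)},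
        {x : EuclideanSpace ℝ (Fin n) |
          sInf ((fun y => (inner ℝ y ξ : ℝ)) '' C) ≤ (inner ℝ x ξ : ℝ)} := by
  refine Set.Subset.antisymm (fun x hx => Set.mem_iInter₂.2 fun ξ hξ =>
    csInf_le (bddBelow_inner_image_of_forall_isAsympDirR hξ.2) ⟨x, hx, rfl⟩) fun x hx => ?_
  by_contra hxC
  obtain ⟨ξ₁, -, hξ₁⟩ := hI
  obtain ⟨ξ, hξ, hξI, hlt⟩ := exists_unit_inner_lt_sInf_of_notMem hne hcl hconv hξ₁ hxC
  exact hlt.not_ge (Set.mem_iInter₂.1 hx ξ ⟨hξ, hξI⟩)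
end

section
/- Write z = x + iy ∈ ℂⁿ with x = (x₁,x′) ∈ ℝ × ℝ^{n−1}, and for ζ = ξ + iη ∈ ℂⁿ set zζ := Σ_k z_k ζ_k, so that Re(zζ) = ⟨x,ξ⟩ − ⟨y,η⟩. Let b ∈ ℝ, κ > 0, H ∈ ℝ, C ≥ 0, let D ⊆ { z = x+iy ∈ ℂⁿ : |x′| + |y| ≤ κ(x₁ − b) } be a Lebesgue-measurable set, and let ν : ℂⁿ → ℂ be measurable with |ν(z)| ≤ C e^{H x₁} for all z ∈ D. If ζ = ξ + iη satisfies ξ₁ > κ(|ξ′| + |η|) + H, then the function z ↦ e^{−zζ} ν(z) is Lebesgue-integrable on D. -/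
open MeasureTheory

/-- The Euclidean norm of a vector of coordinates. -/
noncomputable def euclNorm {m : ℕ} (x : Fin m → ℝ) : ℝ :=
  Real.sqrt (∑ k, x k ^ 2)

/-- The Euclidean norm `|x′|` of the last `m` coordinates of `x = (x₁, x′)`. -/
noncomputable def primeNorm {m : ℕ} (x : Fin (m + 1) → ℝ) : ℝ :=
  Real.sqrt (∑ k, if k = 0 then 0 else x k ^ 2)

/-- The complex pairing `zζ = Σ_k z_k ζ_k`, where `z = x + iy ∈ ℂⁿ` is represented by the
pair `(x, y)` of real vectors. -/
noncomputable def mpairing {m : ℕ}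
    (z : EuclideanSpace ℝ (Fin (m + 1)) × EuclideanSpace ℝ (Fin (m + 1)))
    (ζ : EuclideanSpace ℂ (Fin (m + 1))) : ℂ :=
  ∑ k, ((z.1 k : ℂ) + (z.2 k : ℂ) * Complex.I) * ζ k

/-!
On the cone `|x′| + |y| ≤ κ (x₁ - b)`, Cauchy–Schwarz gives
`Re (zζ) ≥ x₁ ξ₁ - κ (x₁ - b) (|ξ′| + |η|)`, while `|z| ≤ (1 + κ) (x₁ - b) + |b|`. With
`ε = ξ₁ - κ (|ξ′| + |η|) - H > 0` the weight `e^{-Re (zζ)} e^{H x₁}` is therefore bounded by a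
multiple of `e^{-ε |z| / (1 + κ)}`, and `e^{-a |z|}` is integrable on any finite-dimensional
space: in polar coordinates it becomes `r^{d-1} e^{-a r}` on `(0, ∞)`.
-/

open Real Finset

theorem integrable_exp_neg_mul_norm {E : Type*} [NormedAddCommGroup E] [NormedSpace ℝ E]
    [FiniteDimensional ℝ E] [Nontrivial E] [MeasurableSpace E] [BorelSpace E]
    (μ : Measure E) [μ.IsAddHaarMeasure] {a : ℝ} (ha : 0 < a) :
    Integrable (fun x => rexp (-(a * ‖x‖))) μ := by
  rw [integrable_fun_norm_addHaar μ (f := fun r => rexp (-(a * r)))]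
  refine (integrableOn_rpow_mul_exp_neg_mul_rpow (s := (Module.finrank ℝ E - 1 : ℕ)) (p := 1)
    (neg_one_lt_zero.trans_le (Nat.cast_nonneg _)) one_pos ha).congr_fun (fun y _ => ?_)
    measurableSet_Ioi
  simp [rpow_natCast, neg_mul]

theorem abs_sum_mul_le_euclNorm_mul {m : ℕ} (x y : Fin m → ℝ) :
    |∑ k, x k * y k| ≤ euclNorm x * euclNorm y := by
  rw [abs_le]
  constructor
  · have := sum_mul_le_sqrt_mul_sqrt univ (-x) y
    simp only [Pi.neg_apply, neg_mul, sum_neg_distrib, neg_sq] at this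
    unfold euclNorm
    linarith
  · exact sum_mul_le_sqrt_mul_sqrt univ x y

theorem norm_eq_euclNorm {m : ℕ} (x : EuclideanSpace ℝ (Fin m)) : ‖x‖ = euclNorm x := by
  simp [EuclideanSpace.norm_eq, euclNorm]

section Coordinates

variable {m : ℕ}

theorem primeNorm_eq_euclNorm_tail (x : Fin (m + 1) → ℝ) :
    primeNorm x = euclNorm (Fin.tail x) := by
  simp [primeNorm, euclNorm, Fin.sum_univ_succ, Fin.tail, Fin.succ_ne_zero]

theorem norm_sq_eq_sq_add_primeNorm_sq (x : EuclideanSpace ℝ (Fin (m + 1))) :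
    ‖x‖ ^ 2 = x 0 ^ 2 + primeNorm x ^ 2 := by
  rw [EuclideanSpace.norm_eq, primeNorm, sq_sqrt (by positivity), sq_sqrt (by positivity)]
  simp [Fin.sum_univ_succ, Fin.succ_ne_zero]

theorem norm_le_abs_add_primeNorm (x : EuclideanSpace ℝ (Fin (m + 1))) :
    ‖x‖ ≤ |x 0| + primeNorm x := by
  have hp : 0 ≤ primeNorm x := sqrt_nonneg _
  refine le_of_sq_le_sq ?_ (by positivity)
  rw [norm_sq_eq_sq_add_primeNorm_sq, add_sq, sq_abs]
  nlinarith [abs_nonneg (x 0)]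

theorem continuous_mpairing (ζ : EuclideanSpace ℂ (Fin (m + 1))) :
    Continuous fun z => mpairing z ζ := by
  unfold mpairing
  fun_prop

theorem re_mpairing (z : EuclideanSpace ℝ (Fin (m + 1)) × EuclideanSpace ℝ (Fin (m + 1)))
    (ζ : EuclideanSpace ℂ (Fin (m + 1))) :
    (mpairing z ζ).re = z.1 0 * (ζ 0).re + ∑ i : Fin m, z.1 i.succ * (ζ i.succ).re
      - ∑ k, z.2 k * (ζ k).im := by
  rw [mpairing, Complex.re_sum, ← Fin.sum_univ_succ (f := fun k => z.1 k * (ζ k).re),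
    ← sum_sub_distrib]
  refine sum_congr rfl fun k _ => ?_
  simp [Complex.mul_re]

theorem re_mpairing_ge (z : EuclideanSpace ℝ (Fin (m + 1)) × EuclideanSpace ℝ (Fin (m + 1)))
    (ζ : EuclideanSpace ℂ (Fin (m + 1))) :
    z.1 0 * (ζ 0).re - (primeNorm z.1 * primeNorm (fun k => (ζ k).re)
      + euclNorm z.2 * euclNorm (fun k => (ζ k).im)) ≤ (mpairing z ζ).re := by
  have h₁ := (abs_le.1 <|
    abs_sum_mul_le_euclNorm_mul (Fin.tail z.1) (Fin.tail fun k => (ζ k).re)).1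
  have h₂ := (abs_le.1 <| abs_sum_mul_le_euclNorm_mul z.2 fun k => (ζ k).im).2
  simp only [Fin.tail] at h₁ h₂
  rw [re_mpairing, primeNorm_eq_euclNorm_tail z.1, primeNorm_eq_euclNorm_tail]
  linarith

end Coordinates

section Cone

variable {m : ℕ} {b κ : ℝ} {z : EuclideanSpace ℝ (Fin (m + 1)) × EuclideanSpace ℝ (Fin (m + 1))}

theorem re_mpairing_ge_of_cone (hz : primeNorm z.1 + euclNorm z.2 ≤ κ * (z.1 0 - b))
    (ζ : EuclideanSpace ℂ (Fin (m + 1))) :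
    z.1 0 * (ζ 0).re - κ * (z.1 0 - b) * (primeNorm (fun k => (ζ k).re)
      + euclNorm (fun k => (ζ k).im)) ≤ (mpairing z ζ).re := by
  have hp : 0 ≤ primeNorm z.1 := sqrt_nonneg _
  have he : 0 ≤ euclNorm z.2 := sqrt_nonneg _
  have hpξ : 0 ≤ primeNorm (fun k => (ζ k).re) := sqrt_nonneg _
  have heη : 0 ≤ euclNorm (fun k => (ζ k).im) := sqrt_nonneg _
  nlinarith [re_mpairing_ge z ζ]

theorem sub_nonneg_of_cone (hκ : 0 < κ) (hz : primeNorm z.1 + euclNorm z.2 ≤ κ * (z.1 0 - b)) :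
    0 ≤ z.1 0 - b :=
  nonneg_of_mul_nonneg_right ((add_nonneg (sqrt_nonneg _) (sqrt_nonneg _)).trans hz) hκ

theorem norm_le_of_cone (hκ : 0 < κ) (hz : primeNorm z.1 + euclNorm z.2 ≤ κ * (z.1 0 - b)) :
    ‖z‖ ≤ (1 + κ) * (z.1 0 - b) + |b| := by
  have h₁ : ‖z‖ ≤ ‖z.1‖ + ‖z.2‖ := norm_prod_le_iff.2
    ⟨le_add_of_nonneg_right (norm_nonneg _), le_add_of_nonneg_left (norm_nonneg _)⟩
  have h₂ : |z.1 0| ≤ (z.1 0 - b) + |b| := by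
    simpa [abs_of_nonneg (sub_nonneg_of_cone hκ hz)] using abs_sub_le (z.1 0) b 0
  linarith [norm_le_abs_add_primeNorm z.1, norm_eq_euclNorm z.2]

theorem exists_re_mpairing_ge_of_cone (hκ : 0 < κ) {H : ℝ} {ζ : EuclideanSpace ℂ (Fin (m + 1))}
    (hζ : κ * (primeNorm (fun k => (ζ k).re) + euclNorm (fun k => (ζ k).im)) + H < (ζ 0).re) :
    ∃ a > 0, ∃ c, ∀ z : EuclideanSpace ℝ (Fin (m + 1)) × EuclideanSpace ℝ (Fin (m + 1)),
      primeNorm z.1 + euclNorm z.2 ≤ κ * (z.1 0 - b) →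
      a * ‖z‖ + H * z.1 0 - c ≤ (mpairing z ζ).re := by
  set ε := (ζ 0).re - κ * (primeNorm (fun k => (ζ k).re) + euclNorm (fun k => (ζ k).im)) - H
  have hε : 0 < ε := by linarith
  refine ⟨ε / (1 + κ), by positivity, ε / (1 + κ) * |b| - ((ζ 0).re - H) * b, fun z hz => ?_⟩
  have hnorm : ε / (1 + κ) * ‖z‖ ≤ ε * (z.1 0 - b) + ε / (1 + κ) * |b| :=
    calc ε / (1 + κ) * ‖z‖ ≤ ε / (1 + κ) * ((1 + κ) * (z.1 0 - b) + |b|) := by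
          gcongr; exact norm_le_of_cone hκ hz
      _ = ε * (z.1 0 - b) + ε / (1 + κ) * |b| := by field_simp
  linarith [re_mpairing_ge_of_cone hz ζ]

end Cone

theorem laplace_transform_integrand_integrable_general {n : ℕ}
    (b κ H C : ℝ) (hκ : 0 < κ)
    (D : Set (EuclideanSpace ℝ (Fin (n + 1)) × EuclideanSpace ℝ (Fin (n + 1))))
    (hDmeas : MeasurableSet D)
    (hD : ∀ z ∈ D, primeNorm z.1 + euclNorm z.2 ≤ κ * (z.1 0 - b))
    (ν : EuclideanSpace ℝ (Fin (n + 1)) × EuclideanSpace ℝ (Fin (n + 1)) → ℂ)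
    (hν : Measurable ν)
    (hbound : ∀ z ∈ D, ‖ν z‖ ≤ C * Real.exp (H * z.1 0))
    (ζ : EuclideanSpace ℂ (Fin (n + 1)))
    (hζ : κ * (primeNorm (fun k => (ζ k).re) + euclNorm (fun k => (ζ k).im)) + H
        < (ζ 0).re) :
    IntegrableOn (fun z => Complex.exp (-(mpairing z ζ)) * ν z) D := by
  obtain ⟨a, ha, c, hre⟩ := exists_re_mpairing_ge_of_cone (b := b) hκ hζ
  -- The Haar instance is found for `volume.prod volume`, not for its abbreviation `volume`.
  have hdom : IntegrableOn (fun z => C * rexp c * rexp (-(a * ‖z‖))) D :=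
    ((integrable_exp_neg_mul_norm (volume.prod volume) ha).const_mul _).integrableOn
  refine hdom.mono' ((Complex.measurable_exp.comp (continuous_mpairing ζ).measurable.neg).mul
    hν).aestronglyMeasurable ((ae_restrict_iff' hDmeas).2 (ae_of_all _ fun z hz => ?_))
  calc ‖Complex.exp (-mpairing z ζ) * ν z‖ = rexp (-(mpairing z ζ).re) * ‖ν z‖ := by
        rw [norm_mul, Complex.norm_exp, Complex.neg_re]
    _ ≤ rexp (c - a * ‖z‖ - H * z.1 0) * (C * rexp (H * z.1 0)) :=
        mul_le_mul (exp_le_exp.2 (by linarith [hre z (hD z hz)])) (hbound z hz) (norm_nonneg _)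
          (exp_pos _).le
    _ = C * rexp c * rexp (-(a * ‖z‖)) := by
        rw [mul_left_comm, ← exp_add, sub_add_cancel, sub_eq_add_neg, exp_add, mul_assoc]

/-- Convergence of the Laplace integral: if `D ⊆ {z = x+iy : |x′| + |y| ≤ κ(x₁ − b)}` and
`|ν(z)| ≤ C e^{H x₁}` on `D`, then for `ζ = ξ + iη` with `ξ₁ > κ(|ξ′| + |η|) + H` the
function `z ↦ e^{−zζ} ν(z)` is Lebesgue-integrable on `D`.  Here `ℂⁿ ≃ ℝⁿ × ℝⁿ` carries
Lebesgue measure, `z = (x, y)`. -/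
theorem laplace_transform_integrand_integrable {n : ℕ}
    (b κ H C : ℝ) (hκ : 0 < κ) (hC : 0 ≤ C)
    (D : Set (EuclideanSpace ℝ (Fin (n + 1)) × EuclideanSpace ℝ (Fin (n + 1))))
    (hDmeas : MeasurableSet D)
    (hD : ∀ z ∈ D, primeNorm z.1 + euclNorm z.2 ≤ κ * (z.1 0 - b))
    (ν : EuclideanSpace ℝ (Fin (n + 1)) × EuclideanSpace ℝ (Fin (n + 1)) → ℂ)
    (hν : Measurable ν)
    (hbound : ∀ z ∈ D, ‖ν z‖ ≤ C * Real.exp (H * z.1 0))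
    (ζ : EuclideanSpace ℂ (Fin (n + 1)))
    (hζ : κ * (primeNorm (fun k => (ζ k).re) + euclNorm (fun k => (ζ k).im)) + H
        < (ζ 0).re) :
    IntegrableOn (fun z => Complex.exp (-(mpairing z ζ)) * ν z) D :=
  laplace_transform_integrand_integrable_general b κ H C hκ D hDmeas hD ν hν hbound ζ hζ
end

section
/- Let ξ ∈ ℝⁿ with ‖ξ‖ = 1, let 0 < δ ≤ 1, and let x ∈ ℝⁿ. If ⟨x,τ⟩ ≥ 0 for every nonzero τ ∈ ℝⁿ with ‖τ/‖τ‖ − ξ‖ ≤ δ, then ⟨x,ξ⟩ ≥ (δ/2)‖x‖. -/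
/-!
Test `x` against the single vector `τ = ξ - (δ / (2‖x‖)) • x`, which lies at distance `δ / 2`
from `ξ`. Normalizing a vector at most doubles its distance to a unit vector, so the direction of
`τ` is within `δ` of `ξ`; hence `0 ≤ ⟪x, τ⟫ = ⟪x, ξ⟫ - (δ / 2) ‖x‖`.
-/

section NormedSpace

variable {E : Type*} [NormedAddCommGroup E] [NormedSpace ℝ E]

theorem norm_inv_norm_smul_sub_self {τ : E} (hτ : τ ≠ 0) :
    ‖‖τ‖⁻¹ • τ - τ‖ = |1 - ‖τ‖| := by
  have hτpos : 0 < ‖τ‖ := norm_pos_iff.mpr hτ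
  calc ‖‖τ‖⁻¹ • τ - τ‖ = ‖(‖τ‖⁻¹ - 1) • τ‖ := by rw [sub_smul, one_smul]
    _ = |(‖τ‖⁻¹ - 1) * ‖τ‖| := by rw [norm_smul, Real.norm_eq_abs, abs_mul, abs_norm]
    _ = |1 - ‖τ‖| := by rw [sub_mul, inv_mul_cancel₀ hτpos.ne', one_mul, abs_sub_comm]

theorem norm_inv_norm_smul_sub_le_two_mul {ξ τ : E} (hξ : ‖ξ‖ = 1) (hτ : τ ≠ 0) :
    ‖‖τ‖⁻¹ • τ - ξ‖ ≤ 2 * ‖τ - ξ‖ :=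
  calc ‖‖τ‖⁻¹ • τ - ξ‖ ≤ ‖‖τ‖⁻¹ • τ - τ‖ + ‖τ - ξ‖ := norm_sub_le_norm_sub_add_norm_sub _ _ _
    _ = |‖ξ‖ - ‖τ‖| + ‖τ - ξ‖ := by rw [norm_inv_norm_smul_sub_self hτ, hξ]
    _ ≤ ‖τ - ξ‖ + ‖τ - ξ‖ := by gcongr; rw [norm_sub_rev τ]; exact abs_norm_sub_norm_le ξ τ
    _ = 2 * ‖τ - ξ‖ := by ring

end NormedSpace

theorem half_mul_norm_le_inner_of_nonneg_on_cap {E : Type*} [NormedAddCommGroup E]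
    [InnerProductSpace ℝ E] {ξ : E} (hξ : ‖ξ‖ = 1) {δ : ℝ} (hδ0 : 0 ≤ δ) (hδ2 : δ < 2) {x : E}
    (hx : ∀ τ : E, τ ≠ 0 → ‖‖τ‖⁻¹ • τ - ξ‖ ≤ δ → 0 ≤ inner ℝ x τ) :
    δ / 2 * ‖x‖ ≤ inner ℝ x ξ := by
  rcases eq_or_ne x 0 with rfl | hx0
  · simp
  have hxpos : 0 < ‖x‖ := norm_pos_iff.mpr hx0
  set τ := ξ - (δ / 2 / ‖x‖) • x
  have hdist : ‖τ - ξ‖ = δ / 2 := by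
    rw [sub_sub_cancel_left, norm_neg, norm_smul, Real.norm_of_nonneg (by positivity),
      div_mul_cancel₀ _ hxpos.ne']
  have hτ : τ ≠ 0 := by
    rintro hτ
    rw [hτ, zero_sub, norm_neg, hξ] at hdist
    linarith
  have hinner : inner ℝ x τ = inner ℝ x ξ - δ / 2 * ‖x‖ := by
    rw [inner_sub_right, inner_smul_right, real_inner_self_eq_norm_sq]
    field_simp
  have hxτ := hx τ hτ ((norm_inv_norm_smul_sub_le_two_mul hξ hτ).trans (by rw [hdist]; linarith))
  linarith

/-- Dual-cone estimate: let `ξ ∈ ℝⁿ` be a unit vector, `0 < δ ≤ 1` and `x ∈ ℝⁿ`.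
If `⟨x,τ⟩ ≥ 0` for every nonzero `τ` whose direction `τ/‖τ‖` is within distance `δ` of
`ξ`, then `⟨x,ξ⟩ ≥ (δ/2)‖x‖`. -/
theorem dual_cone_estimate {n : ℕ} (ξ : EuclideanSpace ℝ (Fin n)) (hξ : ‖ξ‖ = 1)
    (δ : ℝ) (hδ0 : 0 < δ) (hδ1 : δ ≤ 1) (x : EuclideanSpace ℝ (Fin n))
    (hx : ∀ τ : EuclideanSpace ℝ (Fin n), τ ≠ 0 → ‖(‖τ‖)⁻¹ • τ - ξ‖ ≤ δ →
      0 ≤ (inner ℝ x τ : ℝ)) :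
    δ / 2 * ‖x‖ ≤ (inner ℝ x ξ : ℝ) :=
  half_mul_norm_le_inner_of_nonneg_on_cap hξ hδ0.le (by linarith) hx
end
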